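/- arXiv:1410.0183 — 3 statements merged into one kernel-verified Lean document; each statement's English description precedes it below -/
import Mathlib

section
/- For every j ≥ 0 and real a with a not a nonnegative integer ≤ j, the function φ(x) = x^{-a} · L_j^{(-a)}(x) on (0,∞) satisfies x φ''(x) + (a+1-x) φ'(x) = (a - j) φ(x), where L_j^{(-a)} is the monic generalized Laguerre polynomial with parameter -a. -/
open Polynomial

/-!
Write `φ = x ^ b * P` with `b = -a` and `P = L_j^{(b)}`. Each derivative of `x ^ c * Q` is
`x ^ (c - 1)` times the polynomial `c Q + X Q'`, so `x φ'' + (1 - b - x) φ' + (b + j) φ` equals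
`x ^ (b - 1)` times a polynomial, which is `X` times the Laguerre expression
`X P'' + (b + 1 - X) P' + j P`. That expression vanishes coefficientwise by the recurrence
`(m + 1)(b + m + 1) c_{m+1} + (j - m) c_m = 0` for the coefficients of `P`.
-/

/-- The monic generalized Laguerre polynomial `L_n^{(a)}`,
`L_n^{(a)}(x) = ∑_{k=0}^n (-1)^{n-k} (n choose k) (a+k+1)_{n-k} x^k`,
the monic version of the classical Laguerre polynomial, defined by the Rodrigues
formula `L_n^{(a)}(x) = (-1)^n e^x x^{-a} (d/dx)^n [x^{n+a} e^{-x}]`. -/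
noncomputable def laguerreM (n : ℕ) (a : ℝ) : Polynomial ℝ :=
  ∑ k ∈ Finset.range (n + 1),
    C ((-1 : ℝ)^(n - k) * (n.choose k : ℝ) * (ascPochhammer ℝ (n - k)).eval (a + k + 1)) * X ^ k

lemma laguerreM_coeff (n : ℕ) (b : ℝ) (m : ℕ) :
    (laguerreM n b).coeff m =
      if m ≤ n then (-1 : ℝ) ^ (n - m) * n.choose m * (ascPochhammer ℝ (n - m)).eval (b + m + 1)
      else 0 := by
  simp only [laguerreM, finsetSum_coeff, coeff_C_mul, coeff_X_pow, mul_ite, mul_one, mul_zero,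
    Finset.sum_ite_eq, Finset.mem_range, Nat.lt_succ_iff]

lemma laguerreM_coeff_succ (n m : ℕ) (b : ℝ) :
    (m + 1) * (b + m + 1) * (laguerreM n b).coeff (m + 1) + (n - m) * (laguerreM n b).coeff m
      = 0 := by
  rw [laguerreM_coeff, laguerreM_coeff]
  rcases lt_trichotomy m n with hmn | rfl | hnm
  · obtain ⟨r, rfl⟩ := Nat.exists_eq_add_of_lt hmn
    have hchoose : ((m + r + 1).choose (m + 1) : ℝ) * (m + 1) = (m + r + 1).choose m * (r + 1) := by
      have := Nat.choose_succ_right_eq (m + r + 1) m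
      rw [show m + r + 1 - m = r + 1 by omega] at this
      exact_mod_cast this
    have hpoch : (ascPochhammer ℝ (r + 1)).eval (b + m + 1)
        = (b + m + 1) * (ascPochhammer ℝ r).eval (b + m + 1 + 1) := by
      simp [ascPochhammer_succ_left, eval_comp]
    rw [if_pos (by omega), if_pos (by omega), show m + r + 1 - (m + 1) = r by omega,
      show m + r + 1 - m = r + 1 by omega]
    push_cast
    rw [hpoch, ← add_assoc b (m : ℝ) 1]
    linear_combination
      ((-1 : ℝ) ^ r * (b + m + 1) * (ascPochhammer ℝ r).eval (b + m + 1 + 1)) * hchoose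
  · simp
  · rw [if_neg (by omega), if_neg (by omega)]
    ring

lemma laguerreM_ode (n : ℕ) (b : ℝ) :
    X * derivative (derivative (laguerreM n b)) + (C (b + 1) - X) * derivative (laguerreM n b)
      + C (n : ℝ) * laguerreM n b = 0 := by
  ext m
  have hrec := laguerreM_coeff_succ n m b
  rcases m with _ | m
  · simp only [coeff_add, coeff_sub, sub_mul, coeff_derivative, mul_coeff_zero, coeff_C_zero,
      coeff_X_zero, coeff_zero]
    push_cast at hrec ⊢
    linear_combination hrec
  · simp only [coeff_add, coeff_sub, sub_mul, coeff_C_mul, coeff_X_mul, coeff_derivative,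
      coeff_zero]
    push_cast at hrec ⊢
    linear_combination hrec

noncomputable def eulerDeriv (c : ℝ) (P : ℝ[X]) : ℝ[X] := C c * P + X * derivative P

lemma hasDerivAt_rpow_mul_eval (c : ℝ) (P : ℝ[X]) {x : ℝ} (hx : 0 < x) :
    HasDerivAt (fun y => y ^ c * P.eval y) (x ^ (c - 1) * (eulerDeriv c P).eval x) x := by
  refine ((Real.hasDerivAt_rpow_const (Or.inl hx.ne')).mul (P.hasDerivAt x)).congr_deriv ?_
  simp only [eulerDeriv, eval_add, eval_mul, eval_C, eval_X, Real.rpow_sub_one hx.ne']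
  field_simp

lemma deriv_rpow_mul_eval_eventuallyEq (c : ℝ) (P : ℝ[X]) {x : ℝ} (hx : 0 < x) :
    deriv (fun y => y ^ c * P.eval y) =ᶠ[nhds x] fun y => y ^ (c - 1) * (eulerDeriv c P).eval y := by
  filter_upwards [Ioi_mem_nhds hx] with y hy using (hasDerivAt_rpow_mul_eval c P hy).deriv

lemma eulerDeriv_eulerDeriv_add (c n : ℝ) (P : ℝ[X]) :
    eulerDeriv (c - 1) (eulerDeriv c P) + (C (1 - c) - X) * eulerDeriv c P + C (c + n) * X * P
      = X * (X * derivative (derivative P) + (C (c + 1) - X) * derivative P + C n * P) := by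
  simp only [eulerDeriv, derivative_mul, derivative_C, derivative_X, zero_mul, zero_add, one_mul,
    map_sub, map_add, map_one]
  ring

theorem rpow_mul_eval_ode {b n : ℝ} {P : ℝ[X]}
    (hP : X * derivative (derivative P) + (C (b + 1) - X) * derivative P + C n * P = 0)
    {x : ℝ} (hx : 0 < x) :
    x * deriv (deriv fun y => y ^ b * P.eval y) x
        + (1 - b - x) * deriv (fun y => y ^ b * P.eval y) x
      = (-b - n) * (x ^ b * P.eval x) := by
  have hpoly := congrArg (eval x) (eulerDeriv_eulerDeriv_add b n P)
  rw [hP, mul_zero] at hpoly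
  simp only [eval_add, eval_sub, eval_mul, eval_C, eval_X, eval_zero] at hpoly
  rw [(deriv_rpow_mul_eval_eventuallyEq b P hx).deriv_eq,
    (hasDerivAt_rpow_mul_eval (b - 1) (eulerDeriv b P) hx).deriv,
    (hasDerivAt_rpow_mul_eval b P hx).deriv, Real.rpow_sub_one hx.ne', Real.rpow_sub_one hx.ne']
  field_simp
  linear_combination hpoly

theorem typeII_seed_ode_general (j : ℕ) (a : ℝ)
    (φ : ℝ → ℝ) (hφ : ∀ x : ℝ, φ x = x ^ (-a) * (laguerreM j (-a)).eval x) :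
    ∀ x : ℝ, 0 < x →
      x * deriv (deriv φ) x + (a + 1 - x) * deriv φ x = (a - j) * φ x := by
  intro x hx
  obtain rfl : φ = fun y => y ^ (-a) * (laguerreM j (-a)).eval y := funext hφ
  convert rpow_mul_eval_ode (laguerreM_ode j (-a)) hx using 2 <;> ring

/-- for `j ≥ 0` and real `a` which is not a nonnegative integer `≤ j`,
the type-II seed `φ(x) = x^{-a} · L_j^{(-a)}(x)` satisfies
`x φ'' + (a+1-x) φ' = (a-j) φ` on `(0,∞)`. -/
theorem typeII_seed_ode (j : ℕ) (a : ℝ) (ha : ¬ ∃ k : ℕ, k ≤ j ∧ a = k)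
    (φ : ℝ → ℝ) (hφ : ∀ x : ℝ, φ x = x ^ (-a) * (laguerreM j (-a)).eval x) :
    ∀ x : ℝ, 0 < x →
      x * deriv (deriv φ) x + (a + 1 - x) * deriv φ x = (a - j) * φ x :=
  typeII_seed_ode_general j a φ hφ
end

section
/- Define the type-3 X_1-Laguerre polynomials by L̂_0(x;a) = 1, L̂_n(x;a) = L_1^{(-a)}(-x)·(x∂+a-x)L_{n-2}^{(a)}(x) - x·(d/dx)(L_1^{(-a)}(-x))·L_{n-2}^{(a)}(x) for n ≥ 2, and L̂_1 = 0, where L_1^{(-a)}(-x) = -(x-a+1). Then for all n ≥ 0 with n ≠ 1, they satisfy the five-term recurrence: (x^2+(2-2a)x+a(a-1))·L̂_n(x;a) = L̂_{n+2}(x;a) + 4n·L̂_{n+1}(x;a) + 2n(3n+a-4)·L̂_n(x;a) + 4n(n-2)(n+a-2)·L̂_{n-1}(x;a) + n(n-3)(n+a-2)(n+a-3)·L̂_{n-2}(x;a), with L̂_m := 0 for m < 0. -/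
open Polynomial

lemma coeff_laguerreM (n : ℕ) (a : ℝ) (m : ℕ) :
    (laguerreM n a).coeff m = if m ≤ n then
      (-1 : ℝ)^(n - m) * (n.choose m : ℝ) * (ascPochhammer ℝ (n - m)).eval (a + m + 1) else 0 := by
  simp only [laguerreM, finset_sum_coeff, coeff_C_mul, coeff_X_pow, mul_ite, mul_one, mul_zero,
    Finset.sum_ite_eq, Finset.mem_range, Nat.lt_succ_iff]

lemma poch_left (j : ℕ) (x : ℝ) :
    (ascPochhammer ℝ (j+1)).eval x = x * (ascPochhammer ℝ j).eval (x+1) := by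
  simp [ascPochhammer_succ_left, eval_comp]

lemma lagD (n : ℕ) (a : ℝ) :
    derivative (laguerreM (n+1) a) = C ((n:ℝ)+1) * laguerreM n (a+1) := by
  ext m
  rw [coeff_derivative, coeff_C_mul, coeff_laguerreM, coeff_laguerreM]
  by_cases h : m ≤ n
  · rw [if_pos (by omega : m + 1 ≤ n + 1), if_pos h, Nat.succ_sub_succ]
    have hc : ((m:ℝ)+1) * ((n+1).choose (m+1) : ℝ) = ((n:ℝ)+1) * (n.choose m : ℝ) := by
      have := Nat.add_one_mul_choose_eq n m
      have := congrArg (Nat.cast : ℕ → ℝ) this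
      push_cast at this
      linarith [this]
    push_cast
    rw [show a + ((m:ℝ)+1) + 1 = (a+1) + (m:ℝ) + 1 by ring]
    linear_combination ((-1:ℝ)^(n-m) * (ascPochhammer ℝ (n-m)).eval ((a+1)+(m:ℝ)+1)) * hc
  · rw [if_neg h, if_neg (by omega)]
    ring


lemma lagA (n : ℕ) (a : ℝ) :
    laguerreM (n+1) a = laguerreM (n+1) (a+1) + C ((n:ℝ)+1) * laguerreM n (a+1) := by
  ext m
  rw [coeff_add, coeff_C_mul, coeff_laguerreM, coeff_laguerreM, coeff_laguerreM]
  by_cases h : m ≤ n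
  · rw [if_pos (by omega : m ≤ n + 1), if_pos (by omega : m ≤ n + 1), if_pos h,
      show n + 1 - m = (n - m) + 1 by omega, poch_left, ascPochhammer_succ_eval]
    have hc : ((n:ℝ)+1) * (n.choose m : ℝ) = ((n+1).choose m : ℝ) * ((n:ℝ)+1-(m:ℝ)) := by
      have := congrArg (Nat.cast : ℕ → ℝ) (Nat.choose_mul_succ_eq n m)
      push_cast [Nat.cast_sub (by omega : m ≤ n + 1)] at this
      linarith [this]
    have hj : ((n - m : ℕ) : ℝ) = (n:ℝ) - (m:ℝ) := by
      push_cast [Nat.cast_sub h]; ring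
    rw [show a + (m:ℝ) + 1 + 1 = (a+1) + (m:ℝ) + 1 by ring, hj]
    linear_combination ((-1:ℝ)^(n-m+1) * (ascPochhammer ℝ (n-m)).eval ((a+1)+(m:ℝ)+1)) * hc
  · by_cases h2 : m ≤ n + 1
    · have hm : m = n + 1 := by omega
      subst hm
      rw [if_pos h2, if_pos h2, if_neg h, Nat.sub_self]
      simp
    · rw [if_neg h2, if_neg h2, if_neg h]; ring

lemma lagB (n : ℕ) (a : ℝ) :
    X * laguerreM n (a+1) = laguerreM (n+1) a + C ((n:ℝ)+1+a) * laguerreM n a := by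
  ext m
  rw [coeff_add, coeff_C_mul, coeff_laguerreM, coeff_laguerreM]
  cases m with
  | zero =>
      rw [coeff_X_mul_zero, if_pos (by omega), if_pos (by omega)]
      simp only [Nat.sub_zero, Nat.choose_zero_right]
      rw [ascPochhammer_succ_eval]
      push_cast
      ring
  | succ m =>
      rw [coeff_X_mul, coeff_laguerreM]
      by_cases h : m + 1 ≤ n
      · rw [if_pos (by omega : m ≤ n), if_pos (by omega : m + 1 ≤ n + 1), if_pos h,
          show n + 1 - (m+1) = (n - (m+1)) + 1 by omega,
          show n - m = (n - (m+1)) + 1 by omega, ascPochhammer_succ_eval, ascPochhammer_succ_eval]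
        have hc : (((n+1).choose (m+1) : ℝ)) = (n.choose m : ℝ) + (n.choose (m+1) : ℝ) := by
          have := congrArg (Nat.cast : ℕ → ℝ) (Nat.choose_succ_succ n m)
          push_cast at this; linarith [this]
        have hj : ((n - (m+1) : ℕ) : ℝ) = (n:ℝ) - (m:ℝ) - 1 := by
          push_cast [Nat.cast_sub h]; ring
        rw [hj]
        push_cast
        rw [show a + ((m:ℝ)+1) + 1 = (a+1) + (m:ℝ) + 1 by ring]
        rw [hc]
        ring
      · by_cases h2 : m ≤ n
        · have hm : m = n := by omega
          subst hm
          rw [if_pos h2, if_pos (by omega), if_neg h, Nat.sub_self, Nat.succ_sub_succ, Nat.sub_self]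
          push_cast
          rw [show a + ((m:ℝ)+1) + 1 = (a+1) + (m:ℝ) + 1 by ring]
          simp
        · rw [if_neg h2, if_neg (by omega), if_neg h]; ring

lemma lag0 (a : ℝ) : laguerreM 0 a = 1 := by
  simp [laguerreM]

lemma lag1 (a : ℝ) : laguerreM 1 a = X - C (a+1) := by
  simp [laguerreM, Finset.sum_range_succ, ascPochhammer_succ_eval]
  ring

lemma lagXD (n : ℕ) (a : ℝ) :
    X * derivative (laguerreM n a)
      = C (n:ℝ) * laguerreM n a + C ((n:ℝ)*((n:ℝ)+a)) * laguerreM (n-1) a := by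
  cases n with
  | zero => simp [lag0]
  | succ k =>
      rw [lagD, Nat.succ_sub_one]
      have hB := lagB k a
      push_cast
      calc X * (C ((k:ℝ)+1) * laguerreM k (a+1)) = C ((k:ℝ)+1) * (X * laguerreM k (a+1)) := by
            ring
        _ = _ := by
            rw [hB]
            simp only [map_add, map_mul, map_one]
            ring

lemma lagR (n : ℕ) (a : ℝ) :
    laguerreM (n+1) a
      = (X - C (2*(n:ℝ)+a+1)) * laguerreM n a - C ((n:ℝ)*((n:ℝ)+a)) * laguerreM (n-1) a := by
  cases n with
  | zero => simp [lag0, lag1]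
  | succ k =>
      have hB1 := lagB (k+1) a
      have hA := lagA k a
      have hB0 := lagB k a
      rw [Nat.succ_sub_one]
      push_cast at hB1 ⊢
      simp only [map_add, map_mul, map_sub, map_one, map_ofNat] at hB1 hA hB0 ⊢
      linear_combination (-1 : Polynomial ℝ) * hB1 - X * hA - (C ((k:ℝ)) + 1) * hB0

/-- Type-3 X₁-Laguerre polynomials: `L̂_0 = 1`, `L̂_1 = 0`, and for `n ≥ 2`
`L̂_n(x;a) = L_1^{(-a)}(-x)(x∂+a-x)L_{n-2}^{(a)}(x) - x (d/dx)(L_1^{(-a)}(-x)) L_{n-2}^{(a)}(x)`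
with `L_1^{(-a)}(-x) = -(x-a+1)`, and `L̂_m = 0` for `m < 0`. -/
noncomputable def XL3 (a : ℝ) : ℤ → Polynomial ℝ := fun m =>
  if m = 0 then 1 else if m < 2 then 0 else
    (-(X - C (a - 1))) *
        (X * derivative (laguerreM (m - 2).toNat a) + (C a - X) * laguerreM (m - 2).toNat a)
      - X * derivative (-(X - C (a - 1))) * laguerreM (m - 2).toNat a

lemma XL3_zero (a : ℝ) : XL3 a 0 = 1 := by simp [XL3]
lemma XL3_one (a : ℝ) : XL3 a 1 = 0 := by norm_num [XL3]
lemma XL3_neg1 (a : ℝ) : XL3 a (-1) = 0 := by norm_num [XL3]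
lemma XL3_neg2 (a : ℝ) : XL3 a (-2) = 0 := by norm_num [XL3]

lemma XL3_ofNat (a : ℝ) (j : ℕ) : XL3 a ((j:ℤ) + 2) =
    -(X - C (a-1)) * (C (j:ℝ) * laguerreM j a + C ((j:ℝ)*((j:ℝ)+a)) * laguerreM (j-1) a
      + (C a - X) * laguerreM j a) + X * laguerreM j a := by
  have h0 : ¬ ((j:ℤ) + 2 = 0) := by omega
  have h1 : ¬ ((j:ℤ) + 2 < 2) := by omega
  have h2 : ((j:ℤ) + 2 - 2).toNat = j := by omega
  simp only [XL3, h2, if_neg h0, if_neg h1]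
  rw [show X * derivative (laguerreM j a) + (C a - X) * laguerreM j a
      = (C ((j:ℝ)) * laguerreM j a + C ((j:ℝ)*((j:ℝ)+a)) * laguerreM (j-1) a)
        + (C a - X) * laguerreM j a by rw [lagXD]]
  have : derivative (-(X - C (a-1))) = -1 := by simp
  rw [this]
  ring

/-- five-term recurrence for the type-3 X₁-Laguerre polynomials
(valid for all `n ≥ 0`, `n ≠ 1`). -/
theorem X1_laguerre_typeIII_recurrence (a : ℝ) (n : ℤ) (hn : 0 ≤ n) (hn1 : n ≠ 1) :
    (X^2 + C (2 - 2*a) * X + C (a*(a - 1))) * XL3 a n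
      = XL3 a (n + 2)
        + C (4*(n : ℝ)) * XL3 a (n + 1)
        + C (2*(n : ℝ)*(3*(n : ℝ) + a - 4)) * XL3 a n
        + C (4*(n : ℝ)*((n : ℝ) - 2)*((n : ℝ) + a - 2)) * XL3 a (n - 1)
        + C ((n : ℝ)*((n : ℝ) - 3)*((n : ℝ) + a - 2)*((n : ℝ) + a - 3)) * XL3 a (n - 2) := by
  rcases eq_or_ne n 0 with rfl | hn0
  · have h2 := XL3_ofNat a 0
    norm_num [lag0] at h2 ⊢
    rw [h2, XL3_zero]
    simp only [map_ofNat]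
    ring
  · obtain ⟨j, rfl⟩ : ∃ j : ℕ, n = (j:ℤ) + 2 := ⟨(n-2).toNat, by omega⟩
    rcases j with _ | (_ | i)
    · -- n = 2
      have h4 := XL3_ofNat a 2
      have h3 := XL3_ofNat a 1
      have h2 := XL3_ofNat a 0
      have r2 := lagR 1 a
      norm_num [lag0, lag1] at h4 h3 h2 r2 ⊢
      rw [h4, h3, h2, XL3_zero, r2]
      simp only [map_add, map_mul, map_sub, map_one, map_ofNat]
      ring
    · -- n = 3
      have h5 := XL3_ofNat a 3
      have h4 := XL3_ofNat a 2
      have h3 := XL3_ofNat a 1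
      have h2 := XL3_ofNat a 0
      have r3 := lagR 2 a
      have r2 := lagR 1 a
      norm_num [lag0, lag1] at h5 h4 h3 h2 r3 r2 ⊢
      rw [h5, h4, h3, h2, r3, r2]
      simp only [map_add, map_mul, map_sub, map_one, map_ofNat]
      ring
    · -- n = i + 4
      rw [show ((i+2:ℕ):ℤ)+2+2 = ((i+4:ℕ):ℤ)+2 by omega,
          show ((i+2:ℕ):ℤ)+2+1 = ((i+3:ℕ):ℤ)+2 by omega,
          show ((i+2:ℕ):ℤ)+2-1 = ((i+1:ℕ):ℤ)+2 by omega,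
          show ((i+2:ℕ):ℤ)+2-2 = ((i:ℕ):ℤ)+2 by omega,
          XL3_ofNat a (i+4), XL3_ofNat a (i+3), XL3_ofNat a (i+2), XL3_ofNat a (i+1),
          XL3_ofNat a i,
          show i+4-1 = i+3 by omega, show i+3-1 = i+2 by omega, show i+2-1 = i+1 by omega,
          show i+1-1 = i by omega]
      have r4 := lagR (i+3) a
      have r3 := lagR (i+2) a
      have r2 := lagR (i+1) a
      have r1 := lagR i a
      rw [show i+3+1 = i+4 by omega, show i+3-1 = i+2 by omega] at r4
      rw [show i+2+1 = i+3 by omega, show i+2-1 = i+1 by omega] at r3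
      rw [show i+1+1 = i+2 by omega, show i+1-1 = i by omega] at r2
      rw [r4, r3, r2, r1]
      push_cast
      simp only [map_add, map_mul, map_sub, map_one, map_ofNat]
      ring
end

section
/- Define the type-3 X_2-Hermite polynomials by Ĥ_0(x) = 1, Ĥ_1 = Ĥ_2 = 0, and for n ≥ 3, Ĥ_n(x) = (-1/2)·i^{-2}·[H_2(ix)(∂-2x)H_{n-3}(x) - (d/dx)(H_2(ix))·H_{n-3}(x)], where H_k is the monic Hermite polynomial (so H_2(ix) = -x^2 - 1/2 times i^2-normalization gives a real polynomial). Then for all n ≥ 0 with n ∉ {1,2} the seven-term recurrence holds: (x^3 + (3/2)x)·Ĥ_n(x) = Ĥ_{n+3}(x) + (3/2)n·Ĥ_{n+1}(x) + (3/4)n(n-3)·Ĥ_{n-1}(x) + (1/8)n(n-4)(n-5)·Ĥ_{n-3}(x), with Ĥ_m := 0 for m < 0. -/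
/-!
Writing `H_n` for `hermiteC n`, the explicit sum defining `H_n` gives `H_{n+1}' = (n+1) H_n` and
`H_{n+2} = x H_{n+1} - (n+1)/2 H_n`, hence `H_{n+1} = x H_n - H_n'/2`. Since `H_2(ix) = -(x^2 + 1/2)`,
the definition of `Ĥ` collapses to `Ĥ_{j+3} = (x^2 + 1/2) H_{j+1} + x H_j`. Substituting this into
the recurrence and lowering every `H_k` with the three-term recurrence leaves an identity between
polynomials in `x`, `n`, `H_m` and `H_{m+1}`. The values `Ĥ_0 = 1`, `Ĥ_1 = Ĥ_2 = 0` and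
`Ĥ_m = 0` for `m < 0` enter only for `n ∈ {0, 3, 4, 5}`, which are checked separately.
-/

open Polynomial

/-- The monic Hermite polynomial `H_n`, defined by the Rodrigues formula
`H_n(x) = ((-1)^n/2^n) e^{x^2} (d/dx)^n e^{-x^2}`; explicitly
`H_n(x) = ∑_m (-1/4)^m n!/(m!(n-2m)!) x^{n-2m}`. -/
noncomputable def hermiteM (n : ℕ) : Polynomial ℝ :=
  ∑ m ∈ Finset.range (n / 2 + 1),
    C ((-1/4 : ℝ)^m * n.factorial / (m.factorial * (n - 2*m).factorial)) * X ^ (n - 2*m)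

/-- The monic Hermite polynomial viewed over ℂ. -/
noncomputable def hermiteC (n : ℕ) : Polynomial ℂ := (hermiteM n).map Complex.ofRealHom

/-- `H_2(ix)` as a polynomial in `x`. -/
noncomputable def hermiteSeed : Polynomial ℂ := (hermiteC 2).comp (C Complex.I * X)

/-- Type-3 X₂-Hermite polynomials: `Ĥ_0 = 1`, `Ĥ_1 = Ĥ_2 = 0`, and for `n ≥ 3`
`Ĥ_n(x) = (-1/2)·i^{-2}·[H_2(ix)(∂-2x)H_{n-3}(x) - (d/dx)(H_2(ix))·H_{n-3}(x)]`,
with `Ĥ_m = 0` for `m < 0`. -/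
noncomputable def XH3 : ℤ → Polynomial ℂ := fun m =>
  if m = 0 then 1 else if m < 3 then 0 else
    C ((-1/2 : ℂ) * Complex.I ^ (-2 : ℤ)) *
      (hermiteSeed * (derivative (hermiteC (m - 3).toNat)
          - 2 * X * hermiteC (m - 3).toNat)
        - derivative hermiteSeed * hermiteC (m - 3).toNat)

theorem Nat.succ_descFactorial_succ_eq_add (n k : ℕ) :
    (n + 1).descFactorial (k + 1) = n.descFactorial (k + 1) + (k + 1) * n.descFactorial k := by
  simp only [Nat.descFactorial_eq_factorial_mul_choose, Nat.choose_succ_succ, Nat.factorial_succ]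
  ring

/-- The coefficient of `X ^ (n - 2m)` in `hermiteM n`; `n! / (n - 2m)!` is written as a descending
factorial so that it vanishes for `2m > n` and the sums may run over any long enough range. -/
noncomputable def hermiteCoeff (n m : ℕ) : ℝ :=
  (-1 / 4) ^ m * n.descFactorial (2 * m) / m.factorial

lemma hermiteCoeff_zero_right (n : ℕ) : hermiteCoeff n 0 = 1 := by simp [hermiteCoeff]

lemma hermiteCoeff_of_lt {n m : ℕ} (h : n < 2 * m) : hermiteCoeff n m = 0 := by
  simp [hermiteCoeff, Nat.descFactorial_eq_zero_iff_lt.2 h]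

lemma hermiteCoeff_succ_mul (n m : ℕ) :
    hermiteCoeff (n + 1) m * (n + 1 - 2 * m : ℕ) = (n + 1) * hermiteCoeff n m := by
  have h : ((n + 1 - 2 * m : ℕ) : ℝ) * (n + 1).descFactorial (2 * m)
      = (n + 1) * n.descFactorial (2 * m) := by
    exact_mod_cast Nat.succ_descFactorial n (2 * m)
  simp only [hermiteCoeff]
  linear_combination (-1 / 4 : ℝ) ^ m / m.factorial * h

lemma hermiteCoeff_succ_succ (n m : ℕ) :
    hermiteCoeff (n + 2) (m + 1)
      = hermiteCoeff (n + 1) (m + 1) - (n + 1) / 2 * hermiteCoeff n m := by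
  have h₁ := Nat.succ_descFactorial_succ_eq_add (n + 1) (2 * m + 1)
  have h₂ := Nat.succ_descFactorial_succ n (2 * m)
  simp only [hermiteCoeff, show 2 * (m + 1) = 2 * m + 1 + 1 by ring, h₁, h₂, Nat.factorial_succ]
  push_cast
  field_simp
  ring

lemma hermiteM_eq_sum {n N : ℕ} (hN : n / 2 < N) :
    hermiteM n = ∑ m ∈ Finset.range N, C (hermiteCoeff n m) * X ^ (n - 2 * m) := by
  have hterm : ∀ m ∈ Finset.range (n / 2 + 1),
      C ((-1/4 : ℝ) ^ m * n.factorial / (m.factorial * (n - 2 * m).factorial)) * X ^ (n - 2 * m)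
        = C (hermiteCoeff n m) * X ^ (n - 2 * m) := by
    intro m hm
    have hfact : ((n - 2 * m).factorial : ℝ) * n.descFactorial (2 * m) = n.factorial := by
      exact_mod_cast Nat.factorial_mul_descFactorial (by simp at hm; omega)
    rw [hermiteCoeff, ← hfact]
    field_simp
  rw [hermiteM, Finset.sum_congr rfl hterm]
  refine Finset.sum_subset (Finset.range_subset_range.2 hN) fun m _ hm => ?_
  rw [hermiteCoeff_of_lt (by simp at hm; omega), C_0, zero_mul]

lemma derivative_hermiteM_succ (n : ℕ) :
    derivative (hermiteM (n + 1)) = C ((n : ℝ) + 1) * hermiteM n := by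
  rw [hermiteM_eq_sum (N := n + 1) (by omega), hermiteM_eq_sum (N := n + 1) (by omega),
    derivative_sum, Finset.mul_sum]
  refine Finset.sum_congr rfl fun m _ => ?_
  rw [derivative_C_mul_X_pow, hermiteCoeff_succ_mul, C_mul, mul_assoc,
    show n + 1 - 2 * m - 1 = n - 2 * m by omega]

lemma hermiteM_add_two (n : ℕ) :
    hermiteM (n + 2) = X * hermiteM (n + 1) - C (((n : ℝ) + 1) / 2) * hermiteM n := by
  have hterm : ∀ m, C (hermiteCoeff (n + 2) (m + 1)) * X ^ (n + 2 - 2 * (m + 1))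
      = X * (C (hermiteCoeff (n + 1) (m + 1)) * X ^ (n + 1 - 2 * (m + 1)))
        - C (((n : ℝ) + 1) / 2) * (C (hermiteCoeff n m) * X ^ (n - 2 * m)) := by
    intro m
    rw [hermiteCoeff_succ_succ, C_sub, C_mul, show n + 2 - 2 * (m + 1) = n - 2 * m by omega]
    rcases Nat.lt_or_ge n (2 * m + 1) with h | h
    · rw [hermiteCoeff_of_lt (show n + 1 < 2 * (m + 1) by omega), C_0]
      ring
    · rw [mul_left_comm, ← pow_succ', show n + 1 - 2 * (m + 1) + 1 = n - 2 * m by omega]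
      ring
  rw [hermiteM_eq_sum (N := n + 2) (by omega), hermiteM_eq_sum (N := n + 2) (by omega),
    hermiteM_eq_sum (N := n + 1) (by omega), Finset.sum_range_succ' _ (n + 1),
    Finset.sum_range_succ' _ (n + 1), mul_add, Finset.mul_sum, Finset.mul_sum,
    Finset.sum_congr rfl fun m _ => hterm m, Finset.sum_sub_distrib]
  simp only [hermiteCoeff_zero_right, C_1, one_mul, mul_zero, Nat.sub_zero, pow_succ']
  ring

lemma hermiteC_zero : hermiteC 0 = 1 := by simp [hermiteC, hermiteM]

lemma hermiteC_one : hermiteC 1 = X := by simp [hermiteC, hermiteM]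

lemma hermiteC_add_two (n : ℕ) :
    hermiteC (n + 2) = X * hermiteC (n + 1) - C (((n : ℂ) + 1) / 2) * hermiteC n := by
  simp [hermiteC, hermiteM_add_two]

lemma derivative_hermiteC_succ (n : ℕ) :
    derivative (hermiteC (n + 1)) = C ((n : ℂ) + 1) * hermiteC n := by
  simp [hermiteC, derivative_map, derivative_hermiteM_succ]

lemma hermiteC_succ (n : ℕ) :
    hermiteC (n + 1) = X * hermiteC n - C (1 / 2) * derivative (hermiteC n) := by
  cases n with
  | zero => simp [hermiteC_zero, hermiteC_one]
  | succ n =>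
    rw [hermiteC_add_two, derivative_hermiteC_succ, ← mul_assoc, ← C_mul, one_div_mul_eq_div]

lemma hermiteSeed_eq : hermiteSeed = -(X ^ 2 + C (1 / 2)) := by
  have hI : C Complex.I ^ 2 = -1 := by rw [← C_pow, Complex.I_sq, C_neg, C_1]
  rw [hermiteSeed, show 2 = 0 + 2 from rfl, hermiteC_add_two, hermiteC_one, hermiteC_zero]
  simp only [sub_comp, mul_comp, X_comp, C_comp, mul_one, Nat.cast_zero, zero_add]
  linear_combination X ^ 2 * hI

lemma derivative_hermiteSeed : derivative hermiteSeed = -(2 * X) := by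
  rw [hermiteSeed_eq]
  simp [one_add_one_eq_two, C_ofNat]

lemma XH3_of_eq_zero {m : ℤ} (h : m = 0) : XH3 m = 1 := by simp [XH3, h]

lemma XH3_of_lt_three {m : ℤ} (h₀ : m ≠ 0) (h₃ : m < 3) : XH3 m = 0 := by
  simp [XH3, h₀, h₃]

lemma XH3_of_eq_add_three {m : ℤ} (j : ℕ) (h : m = j + 3) :
    XH3 m = (X ^ 2 + C (1 / 2)) * hermiteC (j + 1) + X * hermiteC j := by
  subst h
  have hconst : (-1 / 2 : ℂ) * Complex.I ^ (-2 : ℤ) = 1 / 2 := by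
    rw [zpow_neg, zpow_two, Complex.I_mul_I]
    norm_num
  have hhalf : C (1 / 2 : ℂ) * 2 = 1 := by rw [← C_ofNat, ← C_mul]; norm_num
  rw [XH3, if_neg (by omega), if_neg (by omega), show ((j : ℤ) + 3 - 3).toNat = j by omega,
    hconst, derivative_hermiteSeed, hermiteSeed_eq, hermiteC_succ]
  linear_combination (X ^ 2 + C (1 / 2) + 1) * X * hermiteC j * hhalf

/-- seven-term recurrence for the type-3 X₂-Hermite polynomials,
for all `n ≥ 0` with `n ∉ {1,2}`. -/
theorem X2_hermite_typeIII_recurrence (n : ℤ) (hn : 0 ≤ n) (h1 : n ≠ 1) (h2 : n ≠ 2) :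
    (X^3 + C (3/2 : ℂ) * X) * XH3 n
      = XH3 (n + 3)
        + C ((3/2 : ℂ) * (n : ℂ)) * XH3 (n + 1)
        + C ((3/4 : ℂ) * (n : ℂ) * ((n : ℂ) - 3)) * XH3 (n - 1)
        + C ((1/8 : ℂ) * (n : ℂ) * ((n : ℂ) - 4) * ((n : ℂ) - 5)) * XH3 (n - 3) := by
  lift n to ℕ using hn
  obtain rfl | rfl | rfl | rfl | ⟨m, rfl⟩ : n = 0 ∨ n = 3 ∨ n = 4 ∨ n = 5 ∨ ∃ m, n = m + 6 :=
    by rcases n with _ | _ | _ | _ | _ | _ | m <;> simp_all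
  -- each rewrite below acts on the first `XH3` left, in the order `n, n + 3, n + 1, n - 1, n - 3`
  on_goal 1 => rw [XH3_of_eq_zero (by omega), XH3_of_eq_add_three 0 (by omega),
      XH3_of_lt_three (by omega) (by omega), XH3_of_lt_three (by omega) (by omega),
      XH3_of_lt_three (by omega) (by omega)]
  on_goal 2 => rw [XH3_of_eq_add_three 0 (by omega), XH3_of_eq_add_three 3 (by omega),
      XH3_of_eq_add_three 1 (by omega), XH3_of_lt_three (by omega) (by omega),
      XH3_of_eq_zero (by omega)]
  on_goal 3 => rw [XH3_of_eq_add_three 1 (by omega), XH3_of_eq_add_three 4 (by omega),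
      XH3_of_eq_add_three 2 (by omega), XH3_of_eq_add_three 0 (by omega),
      XH3_of_lt_three (by omega) (by omega)]
  on_goal 4 => rw [XH3_of_eq_add_three 2 (by omega), XH3_of_eq_add_three 5 (by omega),
      XH3_of_eq_add_three 3 (by omega), XH3_of_eq_add_three 1 (by omega),
      XH3_of_lt_three (by omega) (by omega)]
  on_goal 5 => rw [XH3_of_eq_add_three (m + 3) (by omega), XH3_of_eq_add_three (m + 6) (by omega),
      XH3_of_eq_add_three (m + 4) (by omega), XH3_of_eq_add_three (m + 2) (by omega),
      XH3_of_eq_add_three m (by omega)]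
  all_goals
    simp only [zero_add, hermiteC_add_two, hermiteC_one, hermiteC_zero]
    refine Polynomial.funext fun x => ?_
    simp only [eval_add, eval_sub, eval_mul, eval_pow, eval_C, eval_X, eval_one, eval_zero]
    push_cast
    ring
end
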